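/- Assume [L] = 0 in H_2(X;ℚ) and φ is a framing of the torus L. Then φ is a rational topological preferred framing (i.e. [L_φ] ∈ ker i_2^ℚ) if and only if ker i_1^ℚ ⊆ H_{1,φ} ⊗ ℚ. -/
import Mathlib


open Module LinearMap Function Submodule

/-- Assume `[L] = 0` in `H₂(X;ℚ)` and `φ` is a framing of the torus
`L`.  Setup as before: `Z = ∂Y ≅ T³`, `i_k^ℚ` the inclusion-induced maps into `Y` with
rational coefficients, `H_{1,φ}` the longitudinal subgroup of the framing `φ` (its rational
span is the annihilator of the longitudinal torus class `[L_φ]` under the cap-product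
pairing, complementary to `⟨[μ]⟩`), and `[L_φ]` a longitudinal torus class.  The long
exact sequence of `(Y,Z)` and the duality pairing, through which
`ker i₂ = ann(ker i₁)`, are recorded as well.
Conclusion: `φ` is a rational topological preferred framing, i.e. `[L_φ] ∈ ker i₂^ℚ`, if
and only if `ker i₁^ℚ ⊆ H_{1,φ} ⊗ ℚ`. -/
theorem rational_preferred_iff_ker_i1_subset
    (HZ1 HZ2 HY1 HY2 HYZ2 HYZ3 HX2 HU2 : Type)
    [AddCommGroup HZ1] [Module ℚ HZ1] [AddCommGroup HZ2] [Module ℚ HZ2]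
    [AddCommGroup HY1] [Module ℚ HY1] [AddCommGroup HY2] [Module ℚ HY2]
    [AddCommGroup HYZ2] [Module ℚ HYZ2] [AddCommGroup HYZ3] [Module ℚ HYZ3]
    [AddCommGroup HX2] [Module ℚ HX2] [AddCommGroup HU2] [Module ℚ HU2]
    [FiniteDimensional ℚ HZ1] [FiniteDimensional ℚ HZ2] [FiniteDimensional ℚ HY1]
    [FiniteDimensional ℚ HY2] [FiniteDimensional ℚ HYZ2] [FiniteDimensional ℚ HYZ3]
    (i1 : HZ1 →ₗ[ℚ] HY1) (i2 : HZ2 →ₗ[ℚ] HY2)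
    -- the long exact sequence of (Y, Z):
    -- H₃(Y,Z) → H₂(Z) → H₂(Y) → H₂(Y,Z) → H₁(Z) → H₁(Y)
    (δ2 : HY2 →ₗ[ℚ] HYZ2) (bd2 : HYZ2 →ₗ[ℚ] HZ1) (bd3 : HYZ3 →ₗ[ℚ] HZ2)
    (hex0 : Function.Exact ⇑bd3 ⇑i2)
    (hex1 : Function.Exact ⇑i2 ⇑δ2) (hex2 : Function.Exact ⇑δ2 ⇑bd2)
    (hex3 : Function.Exact ⇑bd2 ⇑i1)
    (hdual2 : finrank ℚ HYZ2 = finrank ℚ HY2) (hdual3 : finrank ℚ HYZ3 = finrank ℚ HY1)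
    (hZ1 : finrank ℚ HZ1 = 3) (hZ2 : finrank ℚ HZ2 = 3)
    -- the perfect cap-product pairing on Z = T³ and the compatible duality pairing on Y
    (capZ : HZ1 →ₗ[ℚ] HZ2 →ₗ[ℚ] ℚ)
    (hnd1 : ∀ a : HZ1, (∀ c : HZ2, capZ a c = 0) → a = 0)
    (hnd2 : ∀ c : HZ2, (∀ a : HZ1, capZ a c = 0) → c = 0)
    (capY : HY1 →ₗ[ℚ] HYZ3 →ₗ[ℚ] ℚ)
    (hnat : ∀ (a : HZ1) (z : HYZ3), capY (i1 a) z = capZ a (bd3 z))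
    (hYnd : ∀ z : HYZ3, (∀ y : HY1, capY y z = 0) → z = 0)
    -- the meridian μ and the rational homological data of the framing φ:
    -- H_{1,φ} ⊗ ℚ and the longitudinal torus class [L_φ]
    (μ : HZ1) (H1phi : Submodule ℚ HZ1) (Lphi : HZ2)
    (hcompl : IsCompl (span ℚ {μ}) H1phi)
    (hμL : capZ μ Lphi = 1)
    (hann : ∀ a : HZ1, a ∈ H1phi ↔ capZ a Lphi = 0)
    -- hypothesis: [L] = 0 in H₂(X;ℚ), where [L] is the image of the generator of H₂(U;ℚ)
    (nuU2 : HU2 →ₗ[ℚ] HX2) (uL : HU2) (huL : span ℚ {uL} = (⊤ : Submodule ℚ HU2))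
    (hLnull : nuU2 uL = 0) :
    Lphi ∈ LinearMap.ker i2 ↔ LinearMap.ker i1 ≤ H1phi := by

  have h0 : LinearMap.ker i2 = LinearMap.range bd3 := LinearMap.exact_iff.mp hex0
  have h1 : LinearMap.ker δ2 = LinearMap.range i2 := LinearMap.exact_iff.mp hex1
  have h2 : LinearMap.ker bd2 = LinearMap.range δ2 := LinearMap.exact_iff.mp hex2
  have h3 : LinearMap.ker i1 = LinearMap.range bd2 := LinearMap.exact_iff.mp hex3
  -- the flip of the pairing is a bijection onto the dual
  have hinj : Function.Injective capZ.flip := by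
    rw [← LinearMap.ker_eq_bot, LinearMap.ker_eq_bot']
    intro c hc
    exact hnd2 c (fun a => by simpa using LinearMap.congr_fun hc a)
  have hdualrk : finrank ℚ (Module.Dual ℚ HZ1) = finrank ℚ HZ2 := by
    rw [Subspace.dual_finrank_eq, hZ1, hZ2]
  have hsurj : Function.Surjective capZ.flip := by
    rw [← LinearMap.range_eq_top]
    apply Submodule.eq_top_of_finrank_eq
    rw [LinearMap.finrank_range_of_inj hinj, hdualrk]
  let e : HZ2 ≃ₗ[ℚ] Module.Dual ℚ HZ1 := LinearEquiv.ofBijective capZ.flip ⟨hinj, hsurj⟩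
  set W : Submodule ℚ HZ1 := LinearMap.ker i1 with hWdef
  set A : Submodule ℚ HZ2 := Submodule.comap (capZ.flip) W.dualAnnihilator with hAdef
  have hmemA : ∀ c : HZ2, c ∈ A ↔ ∀ a ∈ W, capZ a c = 0 := by
    intro c
    simp only [hAdef, Submodule.mem_comap, Submodule.mem_dualAnnihilator,
      LinearMap.flip_apply]
  -- dimension counting
  have fa : finrank ℚ (LinearMap.range i2) + finrank ℚ (LinearMap.ker i2) = 3 := by
    rw [LinearMap.finrank_range_add_finrank_ker i2, hZ2]
  have fb : finrank ℚ (LinearMap.range δ2) + finrank ℚ (LinearMap.range i2)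
      = finrank ℚ HY2 := by
    rw [← h1, LinearMap.finrank_range_add_finrank_ker δ2]
  have fc : finrank ℚ (LinearMap.range bd2) + finrank ℚ (LinearMap.range δ2)
      = finrank ℚ HYZ2 := by
    rw [← h2, LinearMap.finrank_range_add_finrank_ker bd2]
  have fW : finrank ℚ W + finrank ℚ W.dualAnnihilator = 3 := by
    have hq := LinearEquiv.finrank_eq (Subspace.quotEquivAnnihilator W)
    have hq2 := Submodule.finrank_quotient_add_finrank W
    rw [hZ1] at hq2
    omega
  have fA : finrank ℚ A = finrank ℚ W.dualAnnihilator := by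
    have hA2 : A = Submodule.map (e.symm : Module.Dual ℚ HZ1 →ₗ[ℚ] HZ2)
        W.dualAnnihilator := by
      rw [← Submodule.comap_equiv_eq_map_symm]
      rfl
    rw [hA2]
    exact LinearEquiv.finrank_map_eq e.symm _
  have fWr : finrank ℚ W = finrank ℚ (LinearMap.range bd2) := by rw [h3]
  have fkey : finrank ℚ A = finrank ℚ (LinearMap.ker i2) := by omega
  -- ker i2 = range bd3 ≤ A, with equal finrank, hence equal
  have hle : LinearMap.ker i2 ≤ A := by
    intro c hc
    rw [h0] at hc
    obtain ⟨z, rfl⟩ := hc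
    rw [hmemA]
    intro a ha
    rw [← hnat]
    have : i1 a = 0 := ha
    rw [this, map_zero, LinearMap.zero_apply]
  have heq : LinearMap.ker i2 = A := Submodule.eq_of_le_of_finrank_le hle (le_of_eq fkey)
  constructor
  · intro hL a ha
    rw [hann]
    exact (hmemA Lphi).mp (heq ▸ hL) a ha
  · intro hsub
    rw [heq, hmemA]
    intro a ha
    exact (hann a).mp (hsub ha)
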